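/- (Minkowski's inequality for Aumann integrals) Let ρ be a norm on ℝ^d, 1 < p < ∞, H : Ω → 𝒦_{bcs}(ℝ^d) measurable, and f, g : Ω → [0,∞) measurable with f^p H and g^p H integrably bounded. Then ρ(∫_Ω (f+g)^p H dμ)^{1/p} ≤ ρ(∫_Ω f^p H dμ)^{1/p} + ρ(∫_Ω g^p H dμ)^{1/p}. -/

import Mathlib

open MeasureTheory
open scoped Pointwise

variable {d : ℕ}

/-- Measurability of a closed-set valued map. -/
def SetValuedMeasurable {Ω : Type*} [MeasurableSpace Ω]
    (F : Ω → Set (EuclideanSpace ℝ (Fin d))) : Prop :=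
  ∀ U : Set (EuclideanSpace ℝ (Fin d)), IsOpen U → MeasurableSet {x | (F x ∩ U).Nonempty}

/-- `F` is integrably bounded. -/
def IntegrablyBounded {Ω : Type*} [MeasurableSpace Ω] (μ : Measure Ω)
    (F : Ω → Set (EuclideanSpace ℝ (Fin d))) : Prop :=
  ∃ k : Ω → ℝ, (∀ x, 0 ≤ k x) ∧ Integrable k μ ∧
    ∀ᵐ x ∂μ, F x ⊆ Metric.closedBall 0 (k x)

/-- The Aumann integral of a set-valued map. -/
def AumannIntegral {Ω : Type*} [MeasurableSpace Ω] (μ : Measure Ω)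
    (F : Ω → Set (EuclideanSpace ℝ (Fin d))) : Set (EuclideanSpace ℝ (Fin d)) :=
  {y | ∃ g : Ω → EuclideanSpace ℝ (Fin d), Measurable g ∧ Integrable g μ ∧
    (∀ᵐ x ∂μ, g x ∈ F x) ∧ ∫ x, g x ∂μ = y}

/-- A norm as a plain function on ℝ^d. -/
def IsNormFun (p : EuclideanSpace ℝ (Fin d) → ℝ) : Prop :=
  (∀ u v, p (u + v) ≤ p u + p v) ∧ (∀ (a : ℝ) v, p (a • v) = |a| * p v) ∧
    (∀ v, p v = 0 → v = 0)

/-- `ρ(K) = sup {ρ(v) : v ∈ K}` for a bounded set `K`. -/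
noncomputable def setNorm (ρ : EuclideanSpace ℝ (Fin d) → ℝ)
    (K : Set (EuclideanSpace ℝ (Fin d))) : ℝ :=
  sSup (ρ '' K)

/-!
Let `y = ∫ h` lie in the Aumann integral of `(f + g)^p H`. By Hahn–Banach there is a linear `ξ`
with `ξ y = ρ y` and `|ξ| ≤ ρ`; put `θ = |ξ ∘ h| / (f + g)^p`, so that `ρ y ≤ ∫ (f + g)^p θ`.
Because `H` is symmetric, `± (f / (f + g))^p h` is an integrable selection of `f^p H` on which `ξ`
takes the value `f^p θ`, whence `∫ f^p θ ≤ ρ(∫ f^p H)`, and likewise for `g`. Minkowski's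
inequality in `L^p(θ μ)` now bounds `(ρ y)^(1/p)` by `ρ(∫ f^p H)^(1/p) + ρ(∫ g^p H)^(1/p)`.
-/

theorem Seminorm.exists_dual_apply_eq_and_abs_le {E : Type*} [AddCommGroup E] [Module ℝ E]
    (q : Seminorm ℝ E) (y : E) : ∃ ξ : E →ₗ[ℝ] ℝ, ξ y = q y ∧ ∀ x, |ξ x| ≤ q x := by
  rcases eq_or_ne y 0 with rfl | hy
  · exact ⟨0, by simp, fun x => by simp⟩
  let y' : ℝ ∙ y := ⟨y, Submodule.mem_span_singleton_self y⟩
  let f : Module.Dual ℝ (ℝ ∙ y) := q y • (LinearEquiv.coord ℝ E y hy).toLinearMap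
  have hf (c : ℝ) : f (c • y') = c * q y := by
    simp only [f, LinearMap.smul_apply, LinearEquiv.coe_coe, map_smul, smul_eq_mul, y',
      LinearEquiv.coord_self]
    ring
  obtain ⟨ξ, hξf, hξq⟩ := Module.Dual.exists_extension_of_le_seminorm_real _ f (p := q) <| by
    rintro ⟨x, hx⟩
    obtain ⟨c, rfl⟩ := Submodule.mem_span_singleton.mp hx
    change f (c • y') ≤ q (c • y)
    rw [hf, map_smul_eq_mul, Real.norm_eq_abs]
    exact mul_le_mul_of_nonneg_right (le_abs_self c) (apply_nonneg q y)
  exact ⟨ξ, by simpa [y'] using (hξf y').trans (by simpa using hf 1), hξq⟩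

theorem integral_Lp_add_le_of_nonneg {α : Type*} [MeasurableSpace α] {μ : Measure α} {p : ℝ}
    (hp : 1 ≤ p) {f g : α → ℝ} (hf : AEMeasurable f μ) (hg : AEMeasurable g μ)
    (hf0 : ∀ x, 0 ≤ f x) (hg0 : ∀ x, 0 ≤ g x)
    (hfp : Integrable (fun x => f x ^ p) μ) (hgp : Integrable (fun x => g x ^ p) μ) :
    (∫ x, (f x + g x) ^ p ∂μ) ^ (1 / p) ≤
      (∫ x, f x ^ p ∂μ) ^ (1 / p) + (∫ x, g x ^ p ∂μ) ^ (1 / p) := by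
  have hp0 : 0 < p := zero_lt_one.trans_le hp
  have hfg0 x : 0 ≤ f x + g x := add_nonneg (hf0 x) (hg0 x)
  have h_nonneg {φ : α → ℝ} (hφ0 : ∀ x, 0 ≤ φ x) : 0 ≤ ∫ x, φ x ^ p ∂μ :=
    integral_nonneg fun x => Real.rpow_nonneg (hφ0 x) p
  have h_rhs := add_nonneg (Real.rpow_nonneg (h_nonneg hf0) (1 / p))
    (Real.rpow_nonneg (h_nonneg hg0) (1 / p))
  by_cases hfgp : Integrable (fun x => (f x + g x) ^ p) μ
  swap
  · rwa [integral_undef hfgp, Real.zero_rpow (by positivity)]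
  have h_ofReal {φ : α → ℝ} (hφ0 : ∀ x, 0 ≤ φ x) (hφp : Integrable (fun x => φ x ^ p) μ) :
      ENNReal.ofReal ((∫ x, φ x ^ p ∂μ) ^ (1 / p)) =
        (∫⁻ x, ENNReal.ofReal (φ x) ^ p ∂μ) ^ (1 / p) := by
    rw [← ENNReal.ofReal_rpow_of_nonneg (h_nonneg hφ0) (by positivity),
      ofReal_integral_eq_lintegral_ofReal hφp (ae_of_all _ fun x => Real.rpow_nonneg (hφ0 x) p)]
    simp_rw [ENNReal.ofReal_rpow_of_nonneg (hφ0 _) hp0.le]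
  rw [← ENNReal.ofReal_le_ofReal_iff h_rhs, ENNReal.ofReal_add (Real.rpow_nonneg (h_nonneg hf0) _)
    (Real.rpow_nonneg (h_nonneg hg0) _), h_ofReal hf0 hfp, h_ofReal hg0 hgp, h_ofReal hfg0 hfgp]
  convert ENNReal.lintegral_Lp_add_le hf.ennreal_ofReal hg.ennreal_ofReal hp using 4 with x
  rw [Pi.add_apply, ENNReal.ofReal_add (hf0 x) (hg0 x)]

theorem integral_Lp_add_le_of_nonneg_of_weight {α : Type*} [MeasurableSpace α] {μ : Measure α}
    {p : ℝ} (hp : 1 ≤ p) {f g w : α → ℝ} (hf : AEMeasurable f μ) (hg : AEMeasurable g μ)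
    (hw : AEMeasurable w μ) (hf0 : ∀ x, 0 ≤ f x) (hg0 : ∀ x, 0 ≤ g x) (hw0 : ∀ x, 0 ≤ w x)
    (hfp : Integrable (fun x => f x ^ p * w x) μ) (hgp : Integrable (fun x => g x ^ p * w x) μ) :
    (∫ x, (f x + g x) ^ p * w x ∂μ) ^ (1 / p) ≤
      (∫ x, f x ^ p * w x ∂μ) ^ (1 / p) + (∫ x, g x ^ p * w x ∂μ) ^ (1 / p) := by
  have hp0 : 0 < p := zero_lt_one.trans_le hp
  have h_rpow {φ : α → ℝ} (hφ0 : ∀ x, 0 ≤ φ x) x : (φ x * w x ^ (1 / p)) ^ p = φ x ^ p * w x := by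
    rw [Real.mul_rpow (hφ0 x) (Real.rpow_nonneg (hw0 x) _), one_div,
      Real.rpow_inv_rpow (hw0 x) hp0.ne']
  have hw' : AEMeasurable (fun x => w x ^ (1 / p)) μ := hw.pow_const _
  have key := integral_Lp_add_le_of_nonneg (f := fun x => f x * w x ^ (1 / p))
    (g := fun x => g x * w x ^ (1 / p)) hp (hf.mul hw') (hg.mul hw')
    (fun x => mul_nonneg (hf0 x) (Real.rpow_nonneg (hw0 x) _))
    (fun x => mul_nonneg (hg0 x) (Real.rpow_nonneg (hw0 x) _))
    (by simpa only [h_rpow hf0] using hfp) (by simpa only [h_rpow hg0] using hgp)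
  simpa only [← add_mul, h_rpow hf0, h_rpow hg0,
    h_rpow (fun x => add_nonneg (hf0 x) (hg0 x))] using key

theorem smul_mem_smul_set_of_neg_mem {E : Type*} [AddCommGroup E] [Module ℝ E] {S : Set E}
    (hS : ∀ v ∈ S, -v ∈ S) {a b ε : ℝ} (hε : ε = 1 ∨ ε = -1) (hab : a = 0 → b = 0) {w : E}
    (hw : w ∈ a • S) : (ε * (b / a)) • w ∈ b • S := by
  obtain ⟨u, hu, rfl⟩ := hw
  refine ⟨ε • u, ?_, ?_⟩
  · rcases hε with rfl | rfl
    · simpa using hu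
    · simpa using hS u hu
  · rcases eq_or_ne a 0 with rfl | ha
    · simp [hab rfl]
    · simp only [smul_smul]
      congr 1
      field_simp

theorem mul_abs_div_eq_of_mem_smul_set {E : Type*} [AddCommGroup E] [Module ℝ E]
    (ξ : E →ₗ[ℝ] ℝ) {S : Set E} {a : ℝ} {w : E} (hw : w ∈ a • S) : a * (|ξ w| / a) = |ξ w| := by
  rcases eq_or_ne a 0 with rfl | ha
  · have hw0 : w = 0 := Set.zero_smul_set_subset S hw
    simp [hw0]
  · exact mul_div_cancel₀ _ ha

namespace IsNormFun

variable {ρ : EuclideanSpace ℝ (Fin d) → ℝ}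

def toSeminorm (hρ : IsNormFun ρ) : Seminorm ℝ (EuclideanSpace ℝ (Fin d)) :=
  Seminorm.of ρ hρ.1 hρ.2.1

theorem nonneg (hρ : IsNormFun ρ) (v : EuclideanSpace ℝ (Fin d)) : 0 ≤ ρ v :=
  apply_nonneg hρ.toSeminorm v

theorem exists_le_mul_norm (hρ : IsNormFun ρ) : ∃ C, 0 < C ∧ ∀ v, ρ v ≤ C * ‖v‖ :=
  hρ.toSeminorm.bound_of_continuous_normedSpace <|
    continuousOn_univ.mp (hρ.toSeminorm.convexOn.continuousOn isOpen_univ)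

theorem exists_dual_apply_eq_and_abs_le (hρ : IsNormFun ρ) (y : EuclideanSpace ℝ (Fin d)) :
    ∃ ξ : EuclideanSpace ℝ (Fin d) →L[ℝ] ℝ, ξ y = ρ y ∧ ∀ w, |ξ w| ≤ ρ w := by
  obtain ⟨ξ, hξy, hξρ⟩ := hρ.toSeminorm.exists_dual_apply_eq_and_abs_le y
  exact ⟨LinearMap.toContinuousLinearMap ξ, hξy, hξρ⟩

theorem setNorm_nonneg (hρ : IsNormFun ρ) (K : Set (EuclideanSpace ℝ (Fin d))) :
    0 ≤ setNorm ρ K :=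
  Real.sSup_nonneg (by rintro _ ⟨v, -, rfl⟩; exact hρ.nonneg v)

end IsNormFun

section Aumann

variable {Ω : Type*} [MeasurableSpace Ω] {μ : Measure Ω} {ρ : EuclideanSpace ℝ (Fin d) → ℝ}
  {H : Ω → Set (EuclideanSpace ℝ (Fin d))}

theorem IntegrablyBounded.le_setNorm_aumannIntegral (hH : IntegrablyBounded μ H)
    (hρ : IsNormFun ρ) {y : EuclideanSpace ℝ (Fin d)} (hy : y ∈ AumannIntegral μ H) :
    ρ y ≤ setNorm ρ (AumannIntegral μ H) := by
  obtain ⟨k, -, hk, hHk⟩ := hH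
  obtain ⟨C, hC0, hC⟩ := hρ.exists_le_mul_norm
  refine le_csSup ⟨C * ∫ x, k x ∂μ, ?_⟩ (Set.mem_image_of_mem ρ hy)
  rintro _ ⟨_, ⟨m, -, hm, hmH, rfl⟩, rfl⟩
  calc ρ (∫ x, m x ∂μ) ≤ C * ‖∫ x, m x ∂μ‖ := hC _
    _ ≤ C * ∫ x, k x ∂μ := by
      gcongr
      refine (norm_integral_le_integral_norm m).trans (integral_mono_ae hm.norm hk ?_)
      filter_upwards [hmH, hHk] with x hmx hHx
      simpa using hHx hmx

theorem exists_rescaled_selection (hs : ∀ x, ∀ v ∈ H x, -v ∈ H x) {a b : Ω → ℝ}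
    (ha : Measurable a) (hb : Measurable b) (hb0 : ∀ x, 0 ≤ b x) (hba : ∀ x, b x ≤ a x)
    {h : Ω → EuclideanSpace ℝ (Fin d)} (hh : Measurable h) (hhi : Integrable h μ)
    (hhH : ∀ᵐ x ∂μ, h x ∈ a x • H x) (ξ : EuclideanSpace ℝ (Fin d) →L[ℝ] ℝ) :
    ∃ v : Ω → EuclideanSpace ℝ (Fin d), Measurable v ∧ Integrable v μ ∧
      (∀ᵐ x ∂μ, v x ∈ b x • H x) ∧ ∀ x, ξ (v x) = b x * (|ξ (h x)| / a x) := by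
  let ε x : ℝ := if 0 ≤ ξ (h x) then 1 else -1
  have hε x : ε x = 1 ∨ ε x = -1 := by unfold ε; split_ifs <;> simp
  have hεξ x : ε x * ξ (h x) = |ξ (h x)| := by
    unfold ε; split_ifs with hx
    · simp [abs_of_nonneg hx]
    · simp [abs_of_neg (not_le.mp hx)]
  have hε_meas : Measurable ε :=
    Measurable.ite (measurableSet_le measurable_const (ξ.measurable.comp hh)) measurable_const
      measurable_const
  have hv_meas : Measurable fun x => (ε x * (b x / a x)) • h x :=
    (hε_meas.mul (hb.div ha)).smul hh
  have hv_norm x : ‖(ε x * (b x / a x)) • h x‖ ≤ ‖h x‖ := by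
    have hba1 : b x / a x ≤ 1 := div_le_one_of_le₀ (hba x) ((hb0 x).trans (hba x))
    have hε1 : |ε x| = 1 := by rcases hε x with h1 | h1 <;> simp [h1]
    rw [norm_smul, Real.norm_eq_abs, abs_mul, hε1, one_mul,
      abs_of_nonneg (div_nonneg (hb0 x) ((hb0 x).trans (hba x)))]
    exact mul_le_of_le_one_left (norm_nonneg _) hba1
  refine ⟨_, hv_meas, hhi.norm.mono' hv_meas.aestronglyMeasurable (ae_of_all _ hv_norm), ?_, ?_⟩
  · filter_upwards [hhH] with x hx
    exact smul_mem_smul_set_of_neg_mem (hs x) (hε x)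
      (fun ha0 => le_antisymm (ha0 ▸ hba x) (hb0 x)) hx
  · intro x
    rw [map_smul, smul_eq_mul, ← hεξ]
    ring

theorem integral_mul_abs_div_le_setNorm (hρ : IsNormFun ρ) (hs : ∀ x, ∀ v ∈ H x, -v ∈ H x)
    {a b : Ω → ℝ} (ha : Measurable a) (hb : Measurable b) (hb0 : ∀ x, 0 ≤ b x)
    (hba : ∀ x, b x ≤ a x) (hbH : IntegrablyBounded μ fun x => b x • H x)
    {h : Ω → EuclideanSpace ℝ (Fin d)} (hh : Measurable h) (hhi : Integrable h μ)
    (hhH : ∀ᵐ x ∂μ, h x ∈ a x • H x) {ξ : EuclideanSpace ℝ (Fin d) →L[ℝ] ℝ}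
    (hξ : ∀ w, |ξ w| ≤ ρ w) :
    Integrable (fun x => b x * (|ξ (h x)| / a x)) μ ∧
      ∫ x, b x * (|ξ (h x)| / a x) ∂μ ≤ setNorm ρ (AumannIntegral μ fun x => b x • H x) := by
  obtain ⟨v, hv, hvi, hvH, hξv⟩ := exists_rescaled_selection hs ha hb hb0 hba hh hhi hhH ξ
  simp only [← hξv]
  refine ⟨ξ.integrable_comp hvi, ?_⟩
  rw [ξ.integral_comp_comm hvi]
  exact (le_abs_self _).trans <| (hξ _).trans <|
    hbH.le_setNorm_aumannIntegral hρ ⟨v, hv, hvi, hvH, rfl⟩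

theorem IsNormFun.le_rpow_of_mem_aumannIntegral_add_rpow (hρ : IsNormFun ρ) {p : ℝ}
    (hp : 1 < p) (hs : ∀ x, ∀ v ∈ H x, -v ∈ H x) {f g : Ω → ℝ}
    (hf : Measurable f) (hg : Measurable g) (hf0 : ∀ x, 0 ≤ f x) (hg0 : ∀ x, 0 ≤ g x)
    (hfH : IntegrablyBounded μ (fun x => f x ^ p • H x))
    (hgH : IntegrablyBounded μ (fun x => g x ^ p • H x)) {y : EuclideanSpace ℝ (Fin d)}
    (hy : y ∈ AumannIntegral μ (fun x => (f x + g x) ^ p • H x)) :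
    ρ y ≤ (setNorm ρ (AumannIntegral μ (fun x => f x ^ p • H x)) ^ (1 / p) +
      setNorm ρ (AumannIntegral μ (fun x => g x ^ p • H x)) ^ (1 / p)) ^ p := by
  have hp0 : 0 < p := zero_lt_one.trans hp
  obtain ⟨ξ, hξy, hξρ⟩ := hρ.exists_dual_apply_eq_and_abs_le y
  obtain ⟨h, hh, hhi, hhH, rfl⟩ := hy
  have hσ : Measurable fun x => (f x + g x) ^ p := (hf.add hg).pow_const p
  have hrpow_le {φ : Ω → ℝ} (hφ0 : ∀ x, 0 ≤ φ x) (hφ : ∀ x, φ x ≤ f x + g x) x :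
      φ x ^ p ≤ (f x + g x) ^ p :=
    Real.rpow_le_rpow (hφ0 x) (hφ x) hp0.le
  obtain ⟨hfθ, hfA⟩ := integral_mul_abs_div_le_setNorm hρ hs hσ (hf.pow_const p)
    (fun x => Real.rpow_nonneg (hf0 x) p) (hrpow_le hf0 fun x => le_add_of_nonneg_right (hg0 x))
    hfH hh hhi hhH hξρ
  obtain ⟨hgθ, hgB⟩ := integral_mul_abs_div_le_setNorm hρ hs hσ (hg.pow_const p)
    (fun x => Real.rpow_nonneg (hg0 x) p) (hrpow_le hg0 fun x => le_add_of_nonneg_left (hf0 x))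
    hgH hh hhi hhH hξρ
  set θ : Ω → ℝ := fun x => |ξ (h x)| / (f x + g x) ^ p
  have hθ0 x : 0 ≤ θ x :=
    div_nonneg (abs_nonneg _) (Real.rpow_nonneg (add_nonneg (hf0 x) (hg0 x)) p)
  have hθ_int_nonneg {φ : Ω → ℝ} (hφ0 : ∀ x, 0 ≤ φ x) : 0 ≤ ∫ x, φ x ^ p * θ x ∂μ :=
    integral_nonneg fun x => mul_nonneg (Real.rpow_nonneg (hφ0 x) p) (hθ0 x)
  have hρy : ρ (∫ x, h x ∂μ) ≤ ∫ x, (f x + g x) ^ p * θ x ∂μ :=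
    calc ρ (∫ x, h x ∂μ) = ∫ x, ξ (h x) ∂μ := by rw [ξ.integral_comp_comm hhi, hξy]
      _ ≤ ∫ x, |ξ (h x)| ∂μ :=
        integral_mono (ξ.integrable_comp hhi) (ξ.integrable_comp hhi).abs fun x => le_abs_self _
      _ = ∫ x, (f x + g x) ^ p * θ x ∂μ :=
        integral_congr_ae <| hhH.mono fun x hx => (mul_abs_div_eq_of_mem_smul_set ξ hx).symm
  have hminkowski := integral_Lp_add_le_of_nonneg_of_weight hp.le hf.aemeasurable hg.aemeasurable
    ((ξ.measurable.comp hh).abs.div hσ).aemeasurable hf0 hg0 hθ0 hfθ hgθ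
  refine hρy.trans ((Real.rpow_inv_le_iff_of_pos (hθ_int_nonneg fun x => add_nonneg (hf0 x) (hg0 x))
    (add_nonneg (Real.rpow_nonneg (hρ.setNorm_nonneg _) _)
      (Real.rpow_nonneg (hρ.setNorm_nonneg _) _)) hp0).mp ?_)
  rw [← one_div]
  exact hminkowski.trans (add_le_add (Real.rpow_le_rpow (hθ_int_nonneg hf0) hfA (by positivity))
    (Real.rpow_le_rpow (hθ_int_nonneg hg0) hgB (by positivity)))

end Aumann

theorem aumann_minkowski_general {Ω : Type*} [MeasurableSpace Ω]
    (μ : Measure Ω)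
    (ρ : EuclideanSpace ℝ (Fin d) → ℝ) (hρ : IsNormFun ρ)
    (p : ℝ) (hp : 1 < p)
    (H : Ω → Set (EuclideanSpace ℝ (Fin d)))
    (hs : ∀ x, ∀ v ∈ H x, -v ∈ H x)
    (f g : Ω → ℝ) (hf : Measurable f) (hg : Measurable g)
    (hf0 : ∀ x, 0 ≤ f x) (hg0 : ∀ x, 0 ≤ g x)
    (hfH : IntegrablyBounded μ (fun x => f x ^ p • H x))
    (hgH : IntegrablyBounded μ (fun x => g x ^ p • H x)) :
    setNorm ρ (AumannIntegral μ (fun x => (f x + g x) ^ p • H x)) ^ (1 / p) ≤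
      setNorm ρ (AumannIntegral μ (fun x => f x ^ p • H x)) ^ (1 / p) +
      setNorm ρ (AumannIntegral μ (fun x => g x ^ p • H x)) ^ (1 / p) := by
  have hp0 : 0 < p := zero_lt_one.trans hp
  set R := setNorm ρ (AumannIntegral μ (fun x => f x ^ p • H x)) ^ (1 / p) +
    setNorm ρ (AumannIntegral μ (fun x => g x ^ p • H x)) ^ (1 / p)
  have hR : 0 ≤ R :=
    add_nonneg (Real.rpow_nonneg (hρ.setNorm_nonneg _) _) (Real.rpow_nonneg (hρ.setNorm_nonneg _) _)
  have hsup : setNorm ρ (AumannIntegral μ (fun x => (f x + g x) ^ p • H x)) ≤ R ^ p := by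
    refine Real.sSup_le ?_ (Real.rpow_nonneg hR p)
    rintro _ ⟨y, hy, rfl⟩
    exact hρ.le_rpow_of_mem_aumannIntegral_add_rpow hp hs hf hg hf0 hg0 hfH hgH hy
  calc _ ≤ (R ^ p) ^ (1 / p) := Real.rpow_le_rpow (hρ.setNorm_nonneg _) hsup (by positivity)
    _ = R := by rw [one_div, Real.rpow_rpow_inv hR hp0.ne']

/-- Minkowski's inequality for Aumann integrals of convex-set valued maps. -/
theorem aumann_minkowski {Ω : Type*} [MeasurableSpace Ω]
    (μ : Measure Ω) [SigmaFinite μ] (hcompl : μ.IsComplete)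
    (ρ : EuclideanSpace ℝ (Fin d) → ℝ) (hρ : IsNormFun ρ)
    (p : ℝ) (hp : 1 < p)
    (H : Ω → Set (EuclideanSpace ℝ (Fin d)))
    (hne : ∀ x, (H x).Nonempty) (hb : ∀ x, Bornology.IsBounded (H x))
    (hc : ∀ x, Convex ℝ (H x)) (hs : ∀ x, ∀ v ∈ H x, -v ∈ H x)
    (hcl : ∀ x, IsClosed (H x)) (hH : SetValuedMeasurable H)
    (f g : Ω → ℝ) (hf : Measurable f) (hg : Measurable g)
    (hf0 : ∀ x, 0 ≤ f x) (hg0 : ∀ x, 0 ≤ g x)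
    (hfH : IntegrablyBounded μ (fun x => f x ^ p • H x))
    (hgH : IntegrablyBounded μ (fun x => g x ^ p • H x)) :
    setNorm ρ (AumannIntegral μ (fun x => (f x + g x) ^ p • H x)) ^ (1 / p) ≤
      setNorm ρ (AumannIntegral μ (fun x => f x ^ p • H x)) ^ (1 / p) +
      setNorm ρ (AumannIntegral μ (fun x => g x ^ p • H x)) ^ (1 / p) :=
  aumann_minkowski_general μ ρ hρ p hp H hs f g hf hg hf0 hg0 hfH hgH
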